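/- Let T_fin(A) be the set of finite injective tuples of atoms (lists of pairwise distinct elements of A, including the empty tuple ε), with finitary permutations acting componentwise. Then: (i) for any fixed atom a there is a surjection f : T_fin(A) → T_fin(A) ∖ {ε} supported by {a} (sending ε to the one-element tuple (a) and every other tuple to itself); (ii) there is an equivariant (empty-supported) surjection g : T_fin(A) ∖ {ε} → T_fin(A) (deleting the first entry of a tuple, and sending one-element tuples to ε); (iii) nevertheless, there is no finitely supported injection from T_fin(A) into T_fin(A) ∖ {ε}; in particular there is no finitely supported bijection between T_fin(A) and T_fin(A) ∖ {ε}. -/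

import Mathlib

open Pointwise

/-- The group of finitary permutations of the set `A` of atoms: bijections of `A`
whose set of non-fixed points is finite. -/
def FinPerm (A : Type*) : Subgroup (Equiv.Perm A) where
  carrier := {π : Equiv.Perm A | {a : A | π a ≠ a}.Finite}
  one_mem' := by simp
  mul_mem' := by
    intro π σ hπ hσ
    refine Set.Finite.subset (Set.Finite.union hπ hσ) ?_
    intro a ha
    simp only [Set.mem_setOf_eq, Set.mem_union] at *
    by_contra h
    push_neg at h
    obtain ⟨h1, h2⟩ := h
    exact ha (by rw [Equiv.Perm.mul_apply, h2, h1])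
  inv_mem' := by
    intro π hπ
    refine Set.Finite.subset hπ ?_
    intro a ha
    simp only [Set.mem_setOf_eq] at *
    intro h
    exact ha (π.injective (by rw [show π (π⁻¹ a) = a from π.apply_symm_apply a, h]))

/-- An element `x` is finitely supported if some finite set of atoms supports it. -/
def FinSupp (A : Type*) {X : Type*} [SMul (FinPerm A) X] (x : X) : Prop :=
  ∃ S : Finset A, MulAction.Supports (FinPerm A) (S : Set A) x

/-- The least support of an element: the intersection of all finite sets of atoms
supporting it. -/
def supp (A : Type*) {X : Type*} [SMul (FinPerm A) X] (x : X) : Set A :=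
  ⋂₀ {S : Set A | S.Finite ∧ MulAction.Supports (FinPerm A) S x}

/-- A set `S` of atoms supports a function `f` if `f (π • x) = π • f x` for every
finitary permutation `π` fixing `S` pointwise. -/
def SuppFun (A : Type*) {X Y : Type*} [SMul (FinPerm A) X] [SMul (FinPerm A) Y]
    (S : Set A) (f : X → Y) : Prop :=
  ∀ π : FinPerm A, (∀ a ∈ S, π • a = a) → ∀ x, f (π • x) = π • f x

/-- A set `S` of atoms supports a function `f` between the subsets `X` and `Y` if, for
every finitary permutation `π` fixing `S` pointwise and every `x ∈ X`, we have
`π • x ∈ X`, `π • f x ∈ Y` and `f (π • x) = π • f x`. -/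
def SuppFunOn (A : Type*) {U V : Type*} [SMul (FinPerm A) U] [SMul (FinPerm A) V]
    (S : Set A) (X : Set U) (Y : Set V) (f : U → V) : Prop :=
  ∀ π : FinPerm A, (∀ a ∈ S, π • a = a) →
    ∀ x ∈ X, π • x ∈ X ∧ π • f x ∈ Y ∧ f (π • x) = π • f x

/-- `℘_fs(X)`: the finitely supported subsets of the set `X`. -/
def Pfs (A : Type*) {U : Type*} [SMul (FinPerm A) U] (X : Set U) : Set (Set U) :=
  {Z : Set U | Z ⊆ X ∧ FinSupp A Z}


/-- Finite injective tuples of atoms: lists of pairwise distinct elements of `A`. -/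
def TFin (A : Type*) : Type _ := {l : List A // l.Nodup}

instance TFin.instSMul (A : Type*) : SMul (FinPerm A) (TFin A) :=
  ⟨fun π t => ⟨t.1.map (fun a => π • a), t.2.map (MulAction.injective π)⟩⟩

instance TFin.instMulAction (A : Type*) : MulAction (FinPerm A) (TFin A) where
  one_smul t := Subtype.ext (by
    show t.1.map (fun a => (1 : FinPerm A) • a) = t.1
    simp)
  mul_smul π σ t := Subtype.ext (by
    show t.1.map (fun a => (π * σ) • a) = (t.1.map (fun a => σ • a)).map (fun a => π • a)
    simp [List.map_map, mul_smul, Function.comp])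

/-! The atoms of a tuple lie in each of its finite supports (an atom outside one could be swapped
with a fresh atom without moving the tuple), and if `S` supports `f` then `S ∪ t` supports `f t`.
So a finitely supported injection `f` maps the finitely many tuples with atoms in `S ∪ y`
injectively, hence surjectively, to themselves; in particular it hits the empty tuple. -/

namespace FinPerm

variable {A : Type*}

def swap [DecidableEq A] (b c : A) : FinPerm A :=
  ⟨Equiv.swap b c, (Set.toFinite {b, c}).subset fun x hx => by
    simpa using (Equiv.swap_apply_ne_self_iff.mp hx).2⟩

theorem swap_smul [DecidableEq A] (b c x : A) : swap b c • x = Equiv.swap b c x := rfl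

end FinPerm

theorem SuppFun.supports_apply {A X Y : Type*} [SMul (FinPerm A) X] [SMul (FinPerm A) Y]
    {S T : Set A} {f : X → Y} (hf : SuppFun A S f) {x : X}
    (hx : MulAction.Supports (FinPerm A) T x) :
    MulAction.Supports (FinPerm A) (S ∪ T) (f x) := fun π hπ => by
  rw [← hf π (fun _ ha => hπ (Or.inl ha)), hx π (fun _ ha => hπ (Or.inr ha))]

namespace TFin

variable {A : Type*}

@[simp]
theorem val_smul (π : FinPerm A) (t : TFin A) : (π • t).1 = t.1.map (π • ·) := rfl

theorem supports (t : TFin A) : MulAction.Supports (FinPerm A) {a | a ∈ t.1} t :=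
  fun _ hπ => Subtype.ext <| (List.map_congr_left fun _ ha => hπ ha).trans (List.map_id _)

theorem mem_of_supports [Infinite A] {T : Set A} (hT : T.Finite) {t : TFin A}
    (ht : MulAction.Supports (FinPerm A) T t) {b : A} (hb : b ∈ t.1) : b ∈ T := by
  classical
  by_contra hbT
  obtain ⟨c, hc⟩ := (hT.union t.1.finite_toSet).infinite_compl.nonempty
  simp only [Set.mem_compl_iff, Set.mem_union, Set.mem_ofPred_eq, not_or] at hc
  have hfix : FinPerm.swap b c • t = t := ht _ fun x hx => by
    rw [FinPerm.swap_smul, Equiv.swap_apply_of_ne_of_ne (by rintro rfl; exact hbT hx)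
      (by rintro rfl; exact hc.1 hx)]
  have hcb : c ∈ (FinPerm.swap b c • t).1 :=
    List.mem_map.mpr ⟨b, hb, by rw [FinPerm.swap_smul, Equiv.swap_apply_left]⟩
  exact hc.2 (hfix ▸ hcb)

theorem mem_or_mem_of_suppFun [Infinite A] {S : Set A} (hS : S.Finite) {f : TFin A → TFin A}
    (hf : SuppFun A S f) (t : TFin A) {b : A} (hb : b ∈ (f t).1) : b ∈ S ∨ b ∈ t.1 :=
  mem_of_supports (hS.union t.1.finite_toSet) (hf.supports_apply t.supports) hb

theorem finite_setOf_forall_mem {S : Set A} (hS : S.Finite) :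
    {t : TFin A | ∀ b ∈ t.1, b ∈ S}.Finite := by
  have : Fintype S := hS.fintype
  refine (Set.finite_range fun u : {l : List S // l.Nodup} =>
    (⟨u.1.map Subtype.val, u.2.map Subtype.val_injective⟩ : TFin A)).subset ?_
  rintro ⟨l, hl⟩ hlS
  lift l to List S using hlS
  exact ⟨⟨l, hl.of_map _⟩, rfl⟩

theorem surjective_of_injective_of_suppFun [Infinite A] {S : Set A} (hS : S.Finite)
    {f : TFin A → TFin A} (hf : SuppFun A S f) (hinj : Function.Injective f) :
    Function.Surjective f := by
  intro y
  set D := {t : TFin A | ∀ b ∈ t.1, b ∈ S ∪ {a | a ∈ y.1}}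
  have hD : D.Finite := finite_setOf_forall_mem (hS.union y.1.finite_toSet)
  have hmaps : Set.MapsTo f D D := fun t ht b hb =>
    (mem_or_mem_of_suppFun hS hf t hb).elim Or.inl (ht b)
  obtain ⟨t, -, hty⟩ := ((hD.injOn_iff_bijOn_of_mapsTo hmaps).mp hinj.injOn).surjOn
    (fun _ hb => Or.inr hb : y ∈ D)
  exact ⟨t, hty⟩

def tail (t : TFin A) : TFin A := ⟨t.1.tail, t.2.tail⟩

theorem suppFun_tail : SuppFun A ∅ (tail : TFin A → TFin A) :=
  fun _ _ t => Subtype.ext (List.map_tail (l := t.1)).symm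

theorem exists_ne_nil_tail_eq [Infinite A] (y : TFin A) : ∃ t : TFin A, t.1 ≠ [] ∧ tail t = y := by
  obtain ⟨c, hc⟩ := y.1.finite_toSet.infinite_compl.nonempty
  exact ⟨⟨c :: y.1, List.nodup_cons.mpr ⟨hc, y.2⟩⟩, List.cons_ne_nil _ _, rfl⟩

def replaceNil (a : A) (t : TFin A) : TFin A :=
  if t.1 = [] then (⟨[a], List.nodup_singleton a⟩ : TFin A) else t

theorem replaceNil_ne_nil (a : A) (t : TFin A) : (replaceNil a t).1 ≠ [] := by
  by_cases h : t.1 = [] <;> simp [replaceNil, h]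

theorem replaceNil_of_eq_nil (a : A) {t : TFin A} (ht : t.1 = []) :
    replaceNil a t = (⟨[a], List.nodup_singleton a⟩ : TFin A) :=
  if_pos ht

theorem replaceNil_of_ne_nil (a : A) {t : TFin A} (ht : t.1 ≠ []) : replaceNil a t = t :=
  if_neg ht

theorem suppFun_replaceNil (a : A) : SuppFun A {a} (replaceNil a) := fun π hπ t => by
  by_cases ht : t.1 = []
  · rw [replaceNil_of_eq_nil a ht, replaceNil_of_eq_nil a (by simp [ht])]
    exact Subtype.ext (show [a] = [π • a] by rw [hπ a rfl])
  · rw [replaceNil_of_ne_nil a ht, replaceNil_of_ne_nil a (by simpa using ht)]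

end TFin

/-- with `T_fin(A)` the invariant set of finite injective tuples of atoms
(with the componentwise action) and `ε` the empty tuple:
(i) for any atom `a` there is a surjection from `T_fin(A)` onto `T_fin(A) ∖ {ε}`
    supported by `{a}`;
(ii) there is an equivariant (empty-supported) surjection from `T_fin(A) ∖ {ε}` onto
     `T_fin(A)`;
(iii) nevertheless there is no finitely supported injection from `T_fin(A)` into
      `T_fin(A) ∖ {ε}`; in particular there is no finitely supported bijection between
      `T_fin(A)` and `T_fin(A) ∖ {ε}`. -/
theorem tfin_surjections_but_no_finSupp_injection {A : Type*} [Infinite A] :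
    (∀ a : A, ∃ f : TFin A → TFin A,
      (∀ t, (f t).1 ≠ []) ∧
      (∀ y : TFin A, y.1 ≠ [] → ∃ t, f t = y) ∧
      SuppFun A ({a} : Set A) f) ∧
    (∃ g : TFin A → TFin A,
      (∀ y : TFin A, ∃ t : TFin A, t.1 ≠ [] ∧ g t = y) ∧
      SuppFun A (∅ : Set A) g) ∧
    (¬ ∃ (f : TFin A → TFin A) (S : Finset A),
      Function.Injective f ∧ (∀ t, (f t).1 ≠ []) ∧ SuppFun A (S : Set A) f) ∧
    (¬ ∃ (h : TFin A → TFin A) (S : Finset A),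
      Function.Injective h ∧ (∀ t, (h t).1 ≠ []) ∧
      (∀ y : TFin A, y.1 ≠ [] → ∃ t, h t = y) ∧ SuppFun A (S : Set A) h) := by
  have no_injection : ¬ ∃ (f : TFin A → TFin A) (S : Finset A),
      Function.Injective f ∧ (∀ t, (f t).1 ≠ []) ∧ SuppFun A (S : Set A) f := by
    rintro ⟨f, S, hinj, hne, hf⟩
    obtain ⟨t, ht⟩ :=
      TFin.surjective_of_injective_of_suppFun S.finite_toSet hf hinj ⟨[], List.nodup_nil⟩
    exact hne t (congrArg Subtype.val ht)
  refine ⟨fun a => ⟨TFin.replaceNil a, TFin.replaceNil_ne_nil a,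
      fun y hy => ⟨y, TFin.replaceNil_of_ne_nil a hy⟩, TFin.suppFun_replaceNil a⟩,
    ⟨TFin.tail, TFin.exists_ne_nil_tail_eq, TFin.suppFun_tail⟩, no_injection, ?_⟩
  rintro ⟨h, S, hinj, hne, -, hsupp⟩
  exact no_injection ⟨h, S, hinj, hne, hsupp⟩
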